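/- For a discrete random variable X uniformly distributed on a finite set 𝒳, and discrete random variables I, J (independent of X and of each other), and any random variable Y, the mutual information satisfies I(X;Y) = log|𝒳| − H(X,I,J | Y) + H(I,J | Y − X), where Y − X denotes the random variable obtained by subtracting X from Y. -/

import Mathlib

open MeasureTheory ProbabilityTheory
open scoped ENNReal

/-- Conditional probability of an event given the sigma-algebra generated by `V`. -/
noncomputable def condProbGiven {Ω : Type*} [MeasurableSpace Ω] (μ : Measure Ω)
    {β : Type*} [MeasurableSpace β] (V : Ω → β) (A : Set Ω) : Ω → ℝ :=
  μ[A.indicator (fun _ => (1 : ℝ)) | MeasurableSpace.comap V inferInstance]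

/-- Conditional (Shannon) entropy of a discrete random variable `W` given an
arbitrary random variable `V`, defined as `E[-log P(W = W(ω) | V)]`. -/
noncomputable def condEntropyRV {Ω : Type*} [MeasurableSpace Ω] (μ : Measure Ω)
    {α β : Type*} [MeasurableSpace β] (W : Ω → α) (V : Ω → β) : ℝ :=
  ∫ ω, - Real.log (condProbGiven μ V {ω' | W ω' = W ω} ω) ∂μ

/-- (Unconditional) Shannon entropy of a discrete random variable `W`. -/
noncomputable def entropyRV {Ω : Type*} [MeasurableSpace Ω] (μ : Measure Ω)
    {α : Type*} (W : Ω → α) : ℝ :=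
  ∫ ω, - Real.log ((μ {ω' | W ω' = W ω}).toReal) ∂μ

/-- Mutual information `I(W; V) = H(W) - H(W | V)` for discrete `W`. -/
noncomputable def mutualInfoRV {Ω : Type*} [MeasurableSpace Ω] (μ : Measure Ω)
    {α β : Type*} [MeasurableSpace β] (W : Ω → α) (V : Ω → β) : ℝ :=
  entropyRV μ W - condEntropyRV μ W V

set_option linter.unusedSectionVars false

section Aux
variable {Ω : Type*} [MeasurableSpace Ω] {μ : Measure Ω} [IsProbabilityMeasure μ]
  {β : Type*} [MeasurableSpace β] {V : Ω → β} {A : Set Ω}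

lemma setIntegral_indicator_one (hA : MeasurableSet A) (s : Set Ω) :
    ∫ ω in s, A.indicator (fun _ => (1:ℝ)) ω ∂μ = (μ (A ∩ s)).toReal := by
  rw [setIntegral_indicator hA, setIntegral_const, smul_eq_mul, mul_one, Set.inter_comm, measureReal_def]

lemma condProbGiven_nonneg : 0 ≤ᵐ[μ] condProbGiven μ V A :=
  condExp_nonneg (ae_of_all _ fun ω => Set.indicator_nonneg (fun _ _ => zero_le_one) ω)

lemma condProbGiven_pos (hV : Measurable V) (hA : MeasurableSet A) :
    ∀ᵐ ω ∂μ, ω ∈ A → 0 < condProbGiven μ V A ω := by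
  have hm : MeasurableSpace.comap V inferInstance ≤ _ := hV.comap_le
  set p := condProbGiven μ V A with hp_def
  have hpm : StronglyMeasurable[MeasurableSpace.comap V inferInstance] p :=
    stronglyMeasurable_condExp
  have hs : MeasurableSet[MeasurableSpace.comap V inferInstance] {ω | p ω ≤ 0} :=
    hpm.measurable measurableSet_Iic
  have hs0 : MeasurableSet {ω | p ω ≤ 0} := hm _ hs
  have h1 : ∫ ω in {ω | p ω ≤ 0}, p ω ∂μ
      = ∫ ω in {ω | p ω ≤ 0}, A.indicator (fun _ => (1:ℝ)) ω ∂μ :=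
    setIntegral_condExp hm ((integrable_const (1:ℝ)).indicator hA) hs
  have h2 : ∫ ω in {ω | p ω ≤ 0}, p ω ∂μ ≤ 0 := by
    refine integral_nonpos_of_ae ?_
    exact (ae_restrict_iff' hs0).mpr (ae_of_all _ fun ω hω => hω)
  rw [h1, setIntegral_indicator_one hA] at h2
  have h3 : μ (A ∩ {ω | p ω ≤ 0}) = 0 := by
    have := ENNReal.toReal_nonneg (a := μ (A ∩ {ω | p ω ≤ 0}))
    have h4 : (μ (A ∩ {ω | p ω ≤ 0})).toReal = 0 := le_antisymm h2 this
    exact (ENNReal.toReal_eq_zero_iff _).mp h4 |>.resolve_right (measure_ne_top μ _)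
  filter_upwards [measure_eq_zero_iff_ae_notMem.mp h3] with ω hω hωA
  by_contra h
  exact hω ⟨hωA, not_lt.mp h⟩

lemma condProbGiven_ae_eq (hV : Measurable V) (hA : MeasurableSet A) {φ : Ω → ℝ}
    (hφm : StronglyMeasurable[MeasurableSpace.comap V inferInstance] φ)
    (hφint : Integrable φ μ)
    (heq : ∀ B : Set β, MeasurableSet B →
      ∫ ω in V ⁻¹' B, φ ω ∂μ = (μ (A ∩ V ⁻¹' B)).toReal) :
    condProbGiven μ V A =ᵐ[μ] φ := by
  have hm : MeasurableSpace.comap V inferInstance ≤ _ := hV.comap_le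
  refine (ae_eq_condExp_of_forall_setIntegral_eq hm
    ((integrable_const (1:ℝ)).indicator hA)
    (fun s _ _ => hφint.integrableOn)
    (fun s hs _ => ?_) hφm.aestronglyMeasurable).symm
  obtain ⟨B, hB, rfl⟩ := hs
  rw [heq B hB, setIntegral_indicator_one hA]
lemma condProbGiven_le_one (hV : Measurable V) (hA : MeasurableSet A) :
    condProbGiven μ V A ≤ᵐ[μ] 1 := by
  have hm : MeasurableSpace.comap V inferInstance ≤ _ := hV.comap_le
  have h := condExp_mono (m := MeasurableSpace.comap V inferInstance) (μ := μ)
    ((integrable_const (1:ℝ)).indicator hA) (integrable_const (1:ℝ))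
    (ae_of_all _ fun ω => Set.indicator_le' (fun _ _ => le_rfl) (fun _ _ => zero_le_one) ω)
  rw [condExp_const hm] at h
  exact h

private lemma min_max_neg_log_mul_le_one {t : ℝ} (h0 : 0 ≤ t) (h1 : t ≤ 1) (c : ℝ) :
    min (max (-Real.log t) 0) c * t ≤ 1 := by
  rcases eq_or_lt_of_le h0 with h | h
  · simp [← h]
  · have h2 : min (max (-Real.log t) 0) c * t ≤ max (-Real.log t) 0 * t :=
      mul_le_mul_of_nonneg_right (min_le_left _ _) h.le
    refine h2.trans ?_
    rcases le_or_gt (-Real.log t) 0 with h' | h'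
    · rw [max_eq_right h']; simp
    · rw [max_eq_left h'.le]
      have hlog : -Real.log t = Real.log t⁻¹ := (Real.log_inv t).symm
      have hle : Real.log t⁻¹ ≤ t⁻¹ - 1 := Real.log_le_sub_one_of_pos (inv_pos.2 h)
      have hinv : t⁻¹ * t = 1 := inv_mul_cancel₀ h.ne'
      nlinarith [hle, hinv, h.le]

lemma integrable_mulIndicator_neg_log_condProb (hV : Measurable V) (hA : MeasurableSet A)
    (hpos_pre : ∀ᵐ ω ∂μ, ω ∈ A → 0 < condProbGiven μ V A ω) :
    Integrable (fun ω => A.indicator (fun _ => (1:ℝ)) ω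
      * (- Real.log (condProbGiven μ V A ω))) μ := by
  have hm : MeasurableSpace.comap V inferInstance ≤ _ := hV.comap_le
  set p := condProbGiven μ V A with hp_def
  have hpm : StronglyMeasurable[MeasurableSpace.comap V inferInstance] p :=
    stronglyMeasurable_condExp
  have hpmeas : Measurable p := hpm.measurable.mono hm le_rfl
  have hp0 : 0 ≤ᵐ[μ] p := condProbGiven_nonneg
  have hp1 : p ≤ᵐ[μ] 1 := condProbGiven_le_one hV hA
  set g : Ω → ℝ := fun ω => max (-Real.log (p ω)) 0 with hg_def
  have hg_m : Measurable[MeasurableSpace.comap V inferInstance] g :=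
    ((Real.measurable_log.comp hpm.measurable).neg.max measurable_const)
  have hg_meas : Measurable g := hg_m.mono hm le_rfl
  have hg0 : ∀ ω, 0 ≤ g ω := fun ω => le_max_right _ _
  set qn : ℕ → Ω → ℝ := fun n ω => min (g ω) n with hqn_def
  have hqn_m : ∀ n, Measurable[MeasurableSpace.comap V inferInstance] (qn n) :=
    fun n => hg_m.min measurable_const
  have hqn0 : ∀ n ω, 0 ≤ qn n ω := fun n ω => le_min (hg0 ω) (Nat.cast_nonneg n)
  have hqn_bd : ∀ n ω, ‖qn n ω‖ ≤ (n : ℝ) := by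
    intro n ω
    rw [Real.norm_eq_abs, abs_of_nonneg (hqn0 n ω)]
    exact min_le_right _ _
  have hind_int : Integrable (A.indicator (fun _ => (1:ℝ))) μ :=
    (integrable_const (1:ℝ)).indicator hA
  -- key step: uniform bound on truncated integrals
  have key : ∀ n : ℕ, ∫ ω, A.indicator (fun _ => (1:ℝ)) ω * qn n ω ∂μ ≤ 1 := by
    intro n
    have hcomm : (fun ω => A.indicator (fun _ => (1:ℝ)) ω * qn n ω)
        = (qn n) * (A.indicator (fun _ => (1:ℝ))) := by
      funext ω; simp [mul_comm]
    rw [hcomm]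
    have hqint : Integrable ((qn n) * (A.indicator (fun _ => (1:ℝ)))) μ :=
      hind_int.bdd_mul ((hqn_m n).mono hm le_rfl).aestronglyMeasurable (ae_of_all _ (hqn_bd n))
    have hmul := condExp_stronglyMeasurable_mul_of_bound hm
      ((hqn_m n).stronglyMeasurable) hind_int (n : ℝ) (ae_of_all _ (hqn_bd n))
    have h1 : ∫ ω, ((qn n) * (A.indicator (fun _ => (1:ℝ)))) ω ∂μ
        = ∫ ω, qn n ω * p ω ∂μ := by
      rw [← integral_condExp (f := (qn n) * (A.indicator (fun _ => (1:ℝ)))) hm]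
      exact integral_congr_ae hmul
    rw [h1]
    have hint2 : Integrable (fun ω => qn n ω * p ω) μ :=
      integrable_condExp.bdd_mul ((hqn_m n).mono hm le_rfl).aestronglyMeasurable (ae_of_all _ (hqn_bd n))
    have hle : (fun ω => qn n ω * p ω) ≤ᵐ[μ] fun _ => (1:ℝ) := by
      filter_upwards [hp0, hp1] with ω h0 h1
      exact min_max_neg_log_mul_le_one h0 h1 (n : ℝ)
    calc ∫ ω, qn n ω * p ω ∂μ ≤ ∫ _ω, (1:ℝ) ∂μ := integral_mono_ae hint2 (integrable_const 1) hle
      _ = 1 := by simp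
  -- now conclude integrability
  set F : Ω → ℝ := fun ω => A.indicator (fun _ => (1:ℝ)) ω * (-Real.log (p ω)) with hF_def
  have hFmeas : Measurable F :=
    (measurable_const.indicator hA).mul (Real.measurable_log.comp hpmeas).neg
  have hpos : ∀ᵐ ω ∂μ, ω ∈ A → 0 < p ω := hpos_pre
  have hind0 : ∀ ω, 0 ≤ A.indicator (fun _ => (1:ℝ)) ω :=
    fun ω => Set.indicator_nonneg (fun _ _ => zero_le_one) ω
  have habs : ∀ᵐ ω ∂μ, ‖F ω‖ = A.indicator (fun _ => (1:ℝ)) ω * g ω := by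
    filter_upwards [hp1, hpos] with ω h1 hp
    by_cases hω : ω ∈ A
    · have hpω : 0 < p ω := hp hω
      have hlog : Real.log (p ω) ≤ 0 := Real.log_nonpos hpω.le (h1)
      simp only [hF_def, hg_def, Set.indicator_of_mem hω, one_mul]
      rw [Real.norm_eq_abs, abs_of_nonneg (by linarith), max_eq_left (by linarith)]
    · simp [hF_def, hg_def, Set.indicator_of_notMem hω]
  refine ⟨hFmeas.aestronglyMeasurable, ?_⟩
  rw [hasFiniteIntegral_iff_norm]
  have hcong : ∫⁻ ω, ENNReal.ofReal ‖F ω‖ ∂μ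
      = ∫⁻ ω, ENNReal.ofReal (A.indicator (fun _ => (1:ℝ)) ω * g ω) ∂μ :=
    lintegral_congr_ae (by filter_upwards [habs] with ω h; rw [h])
  rw [hcong]
  have hmeasn : ∀ n : ℕ, Measurable
      (fun ω => ENNReal.ofReal (A.indicator (fun _ => (1:ℝ)) ω * qn n ω)) := fun n =>
    ((measurable_const.indicator hA).mul ((hqn_m n).mono hm le_rfl)).ennreal_ofReal
  have hmono : Monotone (fun (n : ℕ) (ω : Ω) =>
      ENNReal.ofReal (A.indicator (fun _ => (1:ℝ)) ω * qn n ω)) := by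
    intro n m hnm
    intro ω
    refine ENNReal.ofReal_le_ofReal (mul_le_mul_of_nonneg_left ?_ (hind0 ω))
    exact min_le_min le_rfl (Nat.cast_le.mpr hnm)
  have hMCT : ∫⁻ ω, ENNReal.ofReal (A.indicator (fun _ => (1:ℝ)) ω * g ω) ∂μ
      = ⨆ n : ℕ, ∫⁻ ω, ENNReal.ofReal (A.indicator (fun _ => (1:ℝ)) ω * qn n ω) ∂μ := by
    rw [← lintegral_iSup hmeasn hmono]
    refine lintegral_congr fun ω => ?_
    refine le_antisymm ?_ (iSup_le fun n => ?_)
    · obtain ⟨n, hn⟩ := exists_nat_ge (g ω)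
      refine le_iSup_of_le n (le_of_eq ?_)
      have : qn n ω = g ω := min_eq_left hn
      rw [this]
    · exact ENNReal.ofReal_le_ofReal
        (mul_le_mul_of_nonneg_left (min_le_left _ _) (hind0 ω))
  rw [hMCT]
  refine lt_of_le_of_lt (iSup_le fun n => ?_) (by norm_num : (1:ℝ≥0∞) < ⊤)
  have hqint' : Integrable (fun ω => A.indicator (fun _ => (1:ℝ)) ω * qn n ω) μ := by
    have h := hind_int.bdd_mul ((hqn_m n).mono hm le_rfl).aestronglyMeasurable
      (ae_of_all _ (hqn_bd n))
    exact h.congr (ae_of_all _ fun ω => by simp [Pi.mul_apply, mul_comm])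
  rw [← ofReal_integral_eq_lintegral_ofReal hqint'
    (ae_of_all _ fun ω => mul_nonneg (hind0 ω) (hqn0 n ω))]
  exact ENNReal.ofReal_le_one.mpr (key n)
end Aux

/-- For `X` uniform on the finite set `𝒳`, `I`, `J` discrete with finite supports,
`X, I, J, Z` mutually independent and `Y = X + I + J + Z`,
`I(X;Y) = log|𝒳| - H(X,I,J | Y) + H(I,J | Y - X)`. -/
theorem mutual_info_decomposition
    {Ω : Type*} [MeasurableSpace Ω] (μ : Measure Ω) [IsProbabilityMeasure μ]
    (X I J Z Y : Ω → ℂ) (𝒳 𝒮I 𝒮J : Finset ℂ)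
    (h𝒳 : 𝒳.Nonempty)
    (hXmem : ∀ ω, X ω ∈ 𝒳)
    (hXunif : ∀ x ∈ 𝒳, μ (X ⁻¹' {x}) = (𝒳.card : ℝ≥0∞)⁻¹)
    (hImem : ∀ ω, I ω ∈ 𝒮I) (hJmem : ∀ ω, J ω ∈ 𝒮J)
    (hX : Measurable X) (hI : Measurable I) (hJ : Measurable J) (hZ : Measurable Z)
    (hindep : iIndepFun ![X, I, J, Z] μ)
    (hY : Y = fun ω => X ω + I ω + J ω + Z ω) :
    mutualInfoRV μ X Y =
      Real.log 𝒳.card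
        - condEntropyRV μ (fun ω => (X ω, I ω, J ω)) Y
        + condEntropyRV μ (fun ω => (I ω, J ω)) (fun ω => Y ω - X ω) := by
  classical
  set S : Ω → ℂ := fun ω => I ω + J ω + Z ω with hS_def
  have hSm : Measurable S := (hI.add hJ).add hZ
  have hYm : Measurable Y := by rw [hY]; exact ((hX.add hI).add hJ).add hZ
  have hYS : ∀ ω, Y ω = X ω + S ω := by intro ω; simp only [hY, hS_def]; ring
  have hYX : (fun ω => Y ω - X ω) = S := by funext ω; rw [hYS ω]; ring
  rw [hYX]
  set W : Ω → ℂ × ℂ := fun ω => (I ω, J ω) with hW_def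
  have hWm : Measurable W := hI.prodMk hJ
  -- independence
  have hmeas4 : ∀ i, Measurable (![X, I, J, Z] i) := by
    intro i; fin_cases i <;> simpa
  have hXindep : IndepFun X (fun ω => (W ω, S ω)) μ := by
    have h01 := hindep.indepFun_finset {0} {1, 2, 3} (by decide) hmeas4
    have h2 := h01.comp (_mγ := inferInstance)
      (φ := fun t : ({0} : Finset (Fin 4)) → ℂ => t ⟨0, by decide⟩)
      (ψ := fun t : ({1, 2, 3} : Finset (Fin 4)) → ℂ =>
        ((t ⟨1, by decide⟩, t ⟨2, by decide⟩),
          t ⟨1, by decide⟩ + t ⟨2, by decide⟩ + t ⟨3, by decide⟩))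
      (measurable_pi_apply _)
      (by fun_prop)
    have e1 : ((fun t : ({0} : Finset (Fin 4)) → ℂ => t ⟨0, by decide⟩) ∘
        (fun a (i : ({0} : Finset (Fin 4))) => ![X, I, J, Z] i a)) = X := by
      funext a; simp
    have e2 : ((fun t : ({1, 2, 3} : Finset (Fin 4)) → ℂ =>
        ((t ⟨1, by decide⟩, t ⟨2, by decide⟩),
          t ⟨1, by decide⟩ + t ⟨2, by decide⟩ + t ⟨3, by decide⟩)) ∘
        (fun a (i : ({1, 2, 3} : Finset (Fin 4))) => ![X, I, J, Z] i a))
        = fun ω => (W ω, S ω) := by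
      funext a; simp [hW_def, hS_def]
    rwa [e1, e2] at h2
  have hXSindep : IndepFun X S μ := hXindep.comp measurable_id measurable_snd
  -- pushforward measures and Radon-Nikodym densities
  set ν : Measure ℂ := Measure.map S μ with hν_def
  haveI : IsProbabilityMeasure ν := Measure.isProbabilityMeasure_map hSm.aemeasurable
  have hAw : ∀ w : ℂ × ℂ, MeasurableSet (W ⁻¹' {w}) := fun w => hWm (measurableSet_singleton w)
  have hAx : ∀ x : ℂ, MeasurableSet (X ⁻¹' {x}) := fun x => hX (measurableSet_singleton x)
  set νw : ℂ × ℂ → Measure ℂ := fun w => Measure.map S (μ.restrict (W ⁻¹' {w})) with hνw_def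
  have hνwle : ∀ w, νw w ≤ ν := fun w => Measure.map_mono Measure.restrict_le_self hSm
  have hνwfin : ∀ w, IsFiniteMeasure (νw w) := fun w => isFiniteMeasure_of_le ν (hνwle w)
  set g : ℂ × ℂ → ℂ → ℝ := fun w s => min (((νw w).rnDeriv ν) s).toReal 1 with hg_def
  have hgmeas : ∀ w, Measurable (g w) := fun w =>
    ((Measure.measurable_rnDeriv _ _).ennreal_toReal).min measurable_const
  have hg0 : ∀ w s, 0 ≤ g w s := fun w s => le_min ENNReal.toReal_nonneg zero_le_one
  have hg1 : ∀ w s, g w s ≤ 1 := fun w s => min_le_right _ _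
  have hgset : ∀ w (B : Set ℂ), MeasurableSet B →
      ∫ s in B, g w s ∂ν = ((νw w) B).toReal := by
    intro w B hB
    haveI := hνwfin w
    have h1 : (νw w).rnDeriv ν ≤ᵐ[ν] 1 := Measure.rnDeriv_le_one_of_le (hνwle w)
    have h2 : g w =ᵐ[ν] fun s => (((νw w).rnDeriv ν) s).toReal := by
      filter_upwards [h1] with s hs
      have : (((νw w).rnDeriv ν) s).toReal ≤ 1 := by
        calc (((νw w).rnDeriv ν) s).toReal ≤ (1 : ℝ≥0∞).toReal :=
          ENNReal.toReal_mono (by norm_num) hs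
        _ = 1 := by norm_num
      exact min_eq_left this
    calc ∫ s in B, g w s ∂ν = ∫ s in B, (((νw w).rnDeriv ν) s).toReal ∂ν :=
          integral_congr_ae (ae_restrict_of_ae h2)
      _ = ((νw w) B).toReal :=
          Measure.setIntegral_toReal_rnDeriv (hνwle w).absolutelyContinuous B
  have hνwB : ∀ (w : ℂ × ℂ) (B : Set ℂ), MeasurableSet B →
      (νw w) B = μ (W ⁻¹' {w} ∩ S ⁻¹' B) := by
    intro w B hB
    rw [hνw_def]
    rw [Measure.map_apply hSm hB, Measure.restrict_apply (hSm hB), Set.inter_comm]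
  have hpull : ∀ (w : ℂ × ℂ) (B : Set ℂ), MeasurableSet B →
      ∫ ω in S ⁻¹' B, g w (S ω) ∂μ = ((νw w) B).toReal := by
    intro w B hB
    rw [← hgset w B hB, hν_def]
    exact (setIntegral_map hB (hgmeas w).aestronglyMeasurable hSm.aemeasurable).symm
  -- characterization of P(W = w | S)
  have hG : ∀ w : ℂ × ℂ, condProbGiven μ S (W ⁻¹' {w}) =ᵐ[μ] fun ω => g w (S ω) := by
    intro w
    have hSc : Measurable[MeasurableSpace.comap S inferInstance] S :=
      measurable_iff_comap_le.mpr le_rfl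
    refine condProbGiven_ae_eq hSm (hAw w)
      ((hgmeas w).comp hSc).stronglyMeasurable ?_ ?_
    · refine Integrable.mono' (integrable_const (1:ℝ))
        ((hgmeas w).comp hSm).aestronglyMeasurable (ae_of_all _ fun ω => ?_)
      rw [Real.norm_eq_abs, abs_of_nonneg (hg0 w _)]
      exact hg1 w _
    · intro B hB
      rw [hpull w B hB, hνwB w B hB]
  have hmY : MeasurableSpace.comap Y inferInstance ≤ _ := hYm.comap_le
  have hYc : Measurable[MeasurableSpace.comap Y inferInstance] Y :=
    measurable_iff_comap_le.mpr le_rfl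
  have hP : ∀ (x : ℂ) (w : ℂ × ℂ),
      condProbGiven μ Y (X ⁻¹' {x} ∩ W ⁻¹' {w}) =ᵐ[μ]
        fun ω => condProbGiven μ Y (X ⁻¹' {x}) ω * g w (Y ω - x) := by
    intro x w
    have hfacm : Measurable[MeasurableSpace.comap Y inferInstance]
        (fun ω => g w (Y ω - x)) := (hgmeas w).comp (hYc.sub measurable_const)
    refine condProbGiven_ae_eq hYm ((hAx x).inter (hAw w))
      ((stronglyMeasurable_condExp.measurable.mul hfacm).stronglyMeasurable) ?_ ?_
    · refine Integrable.mono' (integrable_const (1:ℝ))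
        (((stronglyMeasurable_condExp.measurable.mono hmY le_rfl).mul
          ((hgmeas w).comp (hYm.sub measurable_const))).aestronglyMeasurable) ?_
      filter_upwards [condProbGiven_nonneg (μ := μ) (V := Y) (A := X ⁻¹' {x}),
        condProbGiven_le_one hYm (hAx x)] with ω h0 h1
      simp only [Pi.zero_apply] at h0
      simp only [Pi.one_apply] at h1
      rw [Real.norm_eq_abs, abs_mul, abs_of_nonneg h0, abs_of_nonneg (hg0 w _)]
      nlinarith [mul_le_mul h1 (hg1 w (Y ω - x)) (hg0 w (Y ω - x)) zero_le_one]
    · intro B hB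
      set c : Ω → ℝ := fun ω => Set.indicator B (fun _ => (1:ℝ)) (Y ω) * g w (Y ω - x)
        with hc_def
      have hc_m : Measurable[MeasurableSpace.comap Y inferInstance] c :=
        ((measurable_const.indicator hB).comp hYc).mul
          ((hgmeas w).comp (hYc.sub measurable_const))
      have hc_bd : ∀ ω, ‖c ω‖ ≤ 1 := by
        intro ω
        simp only [hc_def, Real.norm_eq_abs, abs_mul]
        have h1 : |Set.indicator B (fun _ => (1:ℝ)) (Y ω)| ≤ 1 := by
          by_cases h : Y ω ∈ B <;> simp [Set.indicator_apply, h]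
        have h2 : |g w (Y ω - x)| ≤ 1 := by
          rw [abs_of_nonneg (hg0 w _)]; exact hg1 w _
        nlinarith [abs_nonneg (Set.indicator B (fun _ => (1:ℝ)) (Y ω)),
          abs_nonneg (g w (Y ω - x)),
          mul_le_mul h1 h2 (abs_nonneg (g w (Y ω - x))) zero_le_one]
      have st1 : ∫ ω in Y ⁻¹' B,
          condProbGiven μ Y (X ⁻¹' {x}) ω * g w (Y ω - x) ∂μ
          = ∫ ω, c ω * condProbGiven μ Y (X ⁻¹' {x}) ω ∂μ := by
        rw [← integral_indicator (hYm hB)]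
        refine integral_congr_ae (ae_of_all _ fun ω => ?_)
        by_cases h : Y ω ∈ B
        · simp only [hc_def, Set.indicator_apply, Set.mem_preimage, h, if_true]
          ring
        · simp only [hc_def, Set.indicator_apply, Set.mem_preimage, h, if_false]
          ring
      have hind_int : Integrable ((X ⁻¹' {x}).indicator (fun _ => (1:ℝ))) μ :=
        (integrable_const (1:ℝ)).indicator (hAx x)
      have hmul := condExp_stronglyMeasurable_mul_of_bound hmY hc_m.stronglyMeasurable
        hind_int 1 (ae_of_all _ hc_bd)
      have hcind_int : Integrable (c * (X ⁻¹' {x}).indicator (fun _ => (1:ℝ))) μ :=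
        hind_int.bdd_mul (hc_m.mono hmY le_rfl).aestronglyMeasurable (ae_of_all _ hc_bd)
      have st2 : ∫ ω, c ω * condProbGiven μ Y (X ⁻¹' {x}) ω ∂μ
          = ∫ ω, c ω * (X ⁻¹' {x}).indicator (fun _ => (1:ℝ)) ω ∂μ := by
        have h1 : ∫ ω, c ω * condProbGiven μ Y (X ⁻¹' {x}) ω ∂μ
            = ∫ ω, (μ[c * (X ⁻¹' {x}).indicator (fun _ => (1:ℝ))|
                MeasurableSpace.comap Y inferInstance]) ω ∂μ :=
          (integral_congr_ae hmul).symm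
        rw [h1, integral_condExp hmY]
        rfl
      set f1 : ℂ → ℝ := Set.indicator {x} (fun _ => (1:ℝ)) with hf1_def
      set F : ℂ → ℝ := fun s => Set.indicator B (fun _ => (1:ℝ)) (x + s) * g w s with hF_def
      have hf1m : Measurable f1 := measurable_const.indicator (measurableSet_singleton x)
      have hFm : Measurable F :=
        ((measurable_const.indicator hB).comp (measurable_const.add measurable_id)).mul
          (hgmeas w)
      have st3 : ∫ ω, c ω * (X ⁻¹' {x}).indicator (fun _ => (1:ℝ)) ω ∂μ
          = ∫ ω, f1 (X ω) * F (S ω) ∂μ := by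
        refine integral_congr_ae (ae_of_all _ fun ω => ?_)
        by_cases h : X ω = x
        · have hYω : Y ω = x + S ω := by rw [hYS ω, h]
          simp only [hc_def, hf1_def, hF_def, Set.indicator_apply, Set.mem_preimage,
            Set.mem_singleton_iff, h, if_true, hYω, add_sub_cancel_left]
          ring
        · simp only [hc_def, hf1_def, hF_def, Set.indicator_apply, Set.mem_preimage,
            Set.mem_singleton_iff, h, if_false, mul_zero, zero_mul]
      have st4 : IndepFun (fun ω => f1 (X ω)) (fun ω => F (S ω)) μ :=
        hXSindep.comp hf1m hFm
      have hint1 : Integrable (fun ω => f1 (X ω)) μ := by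
        refine Integrable.mono' (integrable_const (1:ℝ))
          (hf1m.comp hX).aestronglyMeasurable (ae_of_all _ fun ω => ?_)
        rw [Real.norm_eq_abs, hf1_def]
        by_cases h : X ω ∈ ({x} : Set ℂ) <;> simp [Set.indicator_apply, h]
      have hint2 : Integrable (fun ω => F (S ω)) μ := by
        refine Integrable.mono' (integrable_const (1:ℝ))
          (hFm.comp hSm).aestronglyMeasurable (ae_of_all _ fun ω => ?_)
        simp only [hF_def, Real.norm_eq_abs, abs_mul]
        have h1 : |Set.indicator B (fun _ => (1:ℝ)) (x + S ω)| ≤ 1 := by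
          by_cases h : (x + S ω) ∈ B <;> simp [Set.indicator_apply, h]
        have h2 : |g w (S ω)| ≤ 1 := by rw [abs_of_nonneg (hg0 w _)]; exact hg1 w _
        nlinarith [abs_nonneg (Set.indicator B (fun _ => (1:ℝ)) (x + S ω)),
          abs_nonneg (g w (S ω)),
          mul_le_mul h1 h2 (abs_nonneg (g w (S ω))) zero_le_one]
      have st5 : ∫ ω, f1 (X ω) * F (S ω) ∂μ
          = (∫ ω, f1 (X ω) ∂μ) * ∫ ω, F (S ω) ∂μ :=
        st4.integral_fun_mul_eq_mul_integral hint1.aestronglyMeasurable hint2.aestronglyMeasurable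
      have st6 : ∫ ω, f1 (X ω) ∂μ = (μ (X ⁻¹' {x})).toReal := by
        have heq1 : (fun ω => f1 (X ω)) = (X ⁻¹' {x}).indicator (fun _ => (1:ℝ)) := by
          funext ω; by_cases h : X ω ∈ ({x} : Set ℂ) <;>
            simp [hf1_def, Set.indicator_apply, Set.mem_preimage, h, -Set.indicator_singleton]
        rw [heq1, integral_indicator (hAx x)]
        simp [measureReal_def]
      set B' : Set ℂ := (fun s => x + s) ⁻¹' B with hB'_def
      have hB' : MeasurableSet B' := (measurable_const.add measurable_id) hB
      have st7 : ∫ ω, F (S ω) ∂μ = ((νw w) B').toReal := by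
        have h1 : ∫ ω, F (S ω) ∂μ = ∫ s, F s ∂ν :=
          (integral_map hSm.aemeasurable hFm.aestronglyMeasurable).symm
        rw [h1]
        have h2 : F = B'.indicator (g w) := by
          funext s
          by_cases h : s ∈ B'
          · have hmem : (x + s) ∈ B := Set.mem_preimage.mp h
            simp [hF_def, Set.indicator_apply, h, hmem]
          · have hmem : ¬ (x + s) ∈ B := fun hc => h (Set.mem_preimage.mpr hc)
            simp [hF_def, Set.indicator_apply, h, hmem]
        rw [h2, integral_indicator hB', hgset w B' hB']
      have hseteq : (X ⁻¹' {x} ∩ W ⁻¹' {w}) ∩ Y ⁻¹' B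
          = X ⁻¹' {x} ∩ (fun ω => (W ω, S ω)) ⁻¹' ({w} ×ˢ B') := by
        ext ω
        simp only [Set.mem_inter_iff, Set.mem_preimage, Set.mem_singleton_iff,
          Set.mem_prod, hB'_def]
        constructor
        · rintro ⟨⟨hx, hw⟩, hYB⟩
          refine ⟨hx, hw, ?_⟩
          rwa [← hx, ← hYS ω]
        · rintro ⟨hx, hw, hSB⟩
          refine ⟨⟨hx, hw⟩, ?_⟩
          rw [hYS ω, hx]; exact hSB
      have hws : (fun ω => (W ω, S ω)) ⁻¹' ({w} ×ˢ B') = W ⁻¹' {w} ∩ S ⁻¹' B' := by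
        ext ω
        simp only [Set.mem_preimage, Set.mem_prod, Set.mem_inter_iff,
          Set.mem_singleton_iff]
      have hmeasmul := hXindep.measure_inter_preimage_eq_mul
        (s := {x}) (t := {w} ×ˢ B') (measurableSet_singleton x)
        ((measurableSet_singleton w).prod hB')
      rw [st1, st2, st3, st5, st6, st7, hseteq, hmeasmul, ENNReal.toReal_mul, hws,
        ← hνwB w B' hB']
  -- entropy of X is log |𝒳|
  have hent : entropyRV μ X = Real.log 𝒳.card := by
    have hconst : ∀ ω, - Real.log ((μ {ω' | X ω' = X ω}).toReal) = Real.log 𝒳.card := by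
      intro ω
      have hset : {ω' | X ω' = X ω} = X ⁻¹' {X ω} := rfl
      rw [hset, hXunif (X ω) (hXmem ω), ENNReal.toReal_inv, Real.log_inv, neg_neg]
      norm_num
    simp only [entropyRV]
    calc ∫ ω, - Real.log ((μ {ω' | X ω' = X ω}).toReal) ∂μ
        = ∫ _ω, Real.log 𝒳.card ∂μ := integral_congr_ae (ae_of_all _ hconst)
      _ = Real.log 𝒳.card := by simp
  -- positivity events
  have hposx : ∀ x : ℂ, ∀ᵐ ω ∂μ, ω ∈ X ⁻¹' {x} → 0 < condProbGiven μ Y (X ⁻¹' {x}) ω :=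
    fun x => condProbGiven_pos hYm (hAx x)
  have hposw : ∀ w : ℂ × ℂ, ∀ᵐ ω ∂μ, ω ∈ W ⁻¹' {w} →
      0 < condProbGiven μ S (W ⁻¹' {w}) ω :=
    fun w => condProbGiven_pos hSm (hAw w)
  -- integrability of the conditional entropy integrands
  have hfX_eq : (fun ω => - Real.log (condProbGiven μ Y {ω' | X ω' = X ω} ω))
      = fun ω => ∑ x ∈ 𝒳, (X ⁻¹' {x}).indicator (fun _ => (1:ℝ)) ω
          * (- Real.log (condProbGiven μ Y (X ⁻¹' {x}) ω)) := by
    funext ω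
    rw [Finset.sum_eq_single_of_mem (X ω) (hXmem ω)]
    · have hmem : ω ∈ X ⁻¹' {X ω} := rfl
      rw [Set.indicator_of_mem hmem, one_mul]
      rfl
    · intro b _ hb
      rw [Set.indicator_of_notMem
        (fun hc => hb (Set.mem_singleton_iff.mp (Set.mem_preimage.mp hc)).symm), zero_mul]
  have hIntX : Integrable (fun ω => - Real.log (condProbGiven μ Y {ω' | X ω' = X ω} ω)) μ := by
    rw [hfX_eq]
    exact integrable_finset_sum _ fun x _ =>
      integrable_mulIndicator_neg_log_condProb hYm (hAx x) (hposx x)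
  have hfW_eq : (fun ω => - Real.log (condProbGiven μ S {ω' | W ω' = W ω} ω))
      = fun ω => ∑ w ∈ 𝒮I ×ˢ 𝒮J, (W ⁻¹' {w}).indicator (fun _ => (1:ℝ)) ω
          * (- Real.log (condProbGiven μ S (W ⁻¹' {w}) ω)) := by
    funext ω
    rw [Finset.sum_eq_single_of_mem (W ω) (Finset.mem_product.mpr ⟨hImem ω, hJmem ω⟩)]
    · have hmem : ω ∈ W ⁻¹' {W ω} := rfl
      rw [Set.indicator_of_mem hmem, one_mul]
      rfl
    · intro b _ hb
      rw [Set.indicator_of_notMem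
        (fun hc => hb (Set.mem_singleton_iff.mp (Set.mem_preimage.mp hc)).symm), zero_mul]
  have hIntW : Integrable (fun ω => - Real.log (condProbGiven μ S {ω' | W ω' = W ω} ω)) μ := by
    rw [hfW_eq]
    exact integrable_finset_sum _ fun w _ =>
      integrable_mulIndicator_neg_log_condProb hSm (hAw w) (hposw w)
  -- the a.e. chain rule identity
  have hkeys : ∀ᵐ ω ∂μ,
      (∀ x ∈ 𝒳, ∀ w ∈ 𝒮I ×ˢ 𝒮J,
        condProbGiven μ Y (X ⁻¹' {x} ∩ W ⁻¹' {w}) ω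
          = condProbGiven μ Y (X ⁻¹' {x}) ω * g w (Y ω - x))
      ∧ (∀ x ∈ 𝒳, ω ∈ X ⁻¹' {x} → 0 < condProbGiven μ Y (X ⁻¹' {x}) ω)
      ∧ (∀ w ∈ 𝒮I ×ˢ 𝒮J, condProbGiven μ S (W ⁻¹' {w}) ω = g w (S ω))
      ∧ (∀ w ∈ 𝒮I ×ˢ 𝒮J, ω ∈ W ⁻¹' {w} → 0 < condProbGiven μ S (W ⁻¹' {w}) ω) := by
    refine ((Filter.eventually_all_finset 𝒳).mpr ?_).and
      ((((Filter.eventually_all_finset 𝒳).mpr ?_)).and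
      ((((Filter.eventually_all_finset (𝒮I ×ˢ 𝒮J)).mpr ?_)).and
      (((Filter.eventually_all_finset (𝒮I ×ˢ 𝒮J)).mpr ?_))))
    · intro x _
      exact (Filter.eventually_all_finset (𝒮I ×ˢ 𝒮J)).mpr fun w _ => hP x w
    · intro x _; exact hposx x
    · intro w _; exact hG w
    · intro w _; exact hposw w
  have hkey : (fun ω => - Real.log (condProbGiven μ Y
        {ω' | (X ω', I ω', J ω') = (X ω, I ω, J ω)} ω))
      =ᵐ[μ] fun ω =>
        (- Real.log (condProbGiven μ Y {ω' | X ω' = X ω} ω))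
        + (- Real.log (condProbGiven μ S {ω' | W ω' = W ω} ω)) := by
    filter_upwards [hkeys] with ω hω
    obtain ⟨h1, h2, h3, h4⟩ := hω
    have hx𝒳 : X ω ∈ 𝒳 := hXmem ω
    have hwmem : W ω ∈ 𝒮I ×ˢ 𝒮J := Finset.mem_product.mpr ⟨hImem ω, hJmem ω⟩
    have hset3 : {ω' | (X ω', I ω', J ω') = (X ω, I ω, J ω)}
        = X ⁻¹' {X ω} ∩ W ⁻¹' {W ω} := by
      ext ω'
      simp only [Set.mem_setOf_eq, Set.mem_inter_iff, Set.mem_preimage,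
        Set.mem_singleton_iff, Prod.mk.injEq, hW_def]
    have hset1 : {ω' | X ω' = X ω} = X ⁻¹' {X ω} := rfl
    have hsetW : {ω' | W ω' = W ω} = W ⁻¹' {W ω} := rfl
    rw [hset3, hset1, hsetW, h1 (X ω) hx𝒳 (W ω) hwmem, h3 (W ω) hwmem]
    have hpx : 0 < condProbGiven μ Y (X ⁻¹' {X ω}) ω := h2 (X ω) hx𝒳 rfl
    have hgw : 0 < g (W ω) (S ω) := by
      rw [← h3 (W ω) hwmem]; exact h4 (W ω) hwmem rfl
    have hYx : Y ω - X ω = S ω := by rw [hYS ω]; ring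
    rw [hYx, Real.log_mul hpx.ne' hgw.ne']
    ring
  -- assemble
  have hcXIJ : condEntropyRV μ (fun ω => (X ω, I ω, J ω)) Y
      = (∫ ω, - Real.log (condProbGiven μ Y {ω' | X ω' = X ω} ω) ∂μ)
        + ∫ ω, - Real.log (condProbGiven μ S {ω' | W ω' = W ω} ω) ∂μ := by
    have h0 : condEntropyRV μ (fun ω => (X ω, I ω, J ω)) Y
        = ∫ ω, - Real.log (condProbGiven μ Y
            {ω' | (X ω', I ω', J ω') = (X ω, I ω, J ω)} ω) ∂μ := rfl
    rw [h0, integral_congr_ae hkey]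
    exact integral_add hIntX hIntW
  have hcX : condEntropyRV μ X Y
      = ∫ ω, - Real.log (condProbGiven μ Y {ω' | X ω' = X ω} ω) ∂μ := rfl
  have hcW : condEntropyRV μ W S
      = ∫ ω, - Real.log (condProbGiven μ S {ω' | W ω' = W ω} ω) ∂μ := rfl
  simp only [mutualInfoRV]
  rw [hent, hcX, hcXIJ, hcW]
  ring
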